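/- arXiv:1305.0737 — 7 statements merged into one kernel-verified Lean document; each statement's English description precedes it below -/
import Mathlib

section
/- Let M be a completely positive n×n matrix orthogonal (in the trace inner product) to a copositive n×n matrix A. Then for every index i with 1 ≤ i ≤ n, the i-th column of M is orthogonal to the i-th column of A, i.e., (M e_i)ᵀ (A e_i) = 0. -/
open Matrix BigOperators

def Copositive {ι : Type} [Fintype ι] (A : Matrix ι ι ℝ) : Prop :=
  A.IsSymm ∧ ∀ x : ι → ℝ, (∀ i, 0 ≤ x i) → 0 ≤ x ⬝ᵥ A.mulVec x

def CompletelyPositive {ι : Type} [Fintype ι] (M : Matrix ι ι ℝ) : Prop :=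
  ∃ (p : ℕ) (v : Fin p → ι → ℝ), (∀ j i, 0 ≤ v j i) ∧
    M = ∑ j, Matrix.vecMulVec (v j) (v j)

noncomputable def cpRank {ι : Type} [Fintype ι] (M : Matrix ι ι ℝ) : ℕ :=
  sInf {p : ℕ | ∃ v : Fin p → ι → ℝ, (∀ j i, 0 ≤ v j i) ∧
    M = ∑ j, Matrix.vecMulVec (v j) (v j)}

noncomputable def pmax (n : ℕ) : ℕ :=
  sSup {k : ℕ | ∃ M : Matrix (Fin n) (Fin n) ℝ, CompletelyPositive M ∧ cpRank M = k}

def ExtremeCopositive {ι : Type} [Fintype ι] (A : Matrix ι ι ℝ) : Prop :=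
  Copositive A ∧ A ≠ 0 ∧ ∀ B C : Matrix ι ι ℝ, Copositive B → Copositive C → A = B + C →
    ∃ s t : ℝ, 0 ≤ s ∧ 0 ≤ t ∧ B = s • A ∧ C = t • A

def E12 (k : ℕ) : Matrix (Fin k) (Fin k) ℝ :=
  Matrix.of fun i j => if (i.val = 0 ∧ j.val = 1) ∨ (i.val = 1 ∧ j.val = 0) then 1 else 0

def InOrbitOfE12 {k : ℕ} (S : Matrix (Fin k) (Fin k) ℝ) : Prop :=
  ∃ (d : Fin k → ℝ) (σ : Equiv.Perm (Fin k)), (∀ i, 0 < d i) ∧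
    S = Matrix.diagonal d * (σ.permMatrix ℝ)ᵀ * E12 k * σ.permMatrix ℝ * Matrix.diagonal d

lemma quad_zero (a b c : ℝ) (hc : 0 < c)
    (H : ∀ t : ℝ, -c ≤ t → 0 ≤ a * t ^ 2 + 2 * b * t) : b = 0 := by
  by_contra hb
  set s : ℝ := min c (|b| / (|a| + 1)) with hs
  have habs : 0 < |b| := abs_pos.mpr hb
  have ha1 : 0 < |a| + 1 := by positivity
  have hspos : 0 < s := lt_min hc (by positivity)
  have hsc : s ≤ c := min_le_left _ _
  have hsb : s ≤ |b| / (|a| + 1) := min_le_right _ _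
  have hsb' : s * (|a| + 1) ≤ |b| := by
    rw [← le_div_iff₀ ha1] ; exact hsb
  have h1 := H s (by linarith)
  have h2 := H (-s) (by linarith)
  have haa : a ≤ |a| := le_abs_self a
  have hba : -|b| ≤ b := neg_abs_le b
  have hbb : b ≤ |b| := le_abs_self b
  have h3 : 2 * |b| * s ≤ a * s ^ 2 := by
    rcases abs_cases b with ⟨h, _⟩ | ⟨h, _⟩ <;> rw [h] <;> linarith
  have h4 : a * s ^ 2 ≤ |a| * s ^ 2 :=
    mul_le_mul_of_nonneg_right haa (sq_nonneg s)
  have h5 : |a| * s ^ 2 + s * s ≤ |b| * s := by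
    have := mul_le_mul_of_nonneg_right hsb' hspos.le
    nlinarith
  nlinarith [mul_pos habs hspos, mul_pos hspos hspos]

lemma key {n : ℕ} (A : Matrix (Fin n) (Fin n) ℝ) (hA : Copositive A)
    (x : Fin n → ℝ) (hx : ∀ i, 0 ≤ x i) (hxAx : x ⬝ᵥ A.mulVec x = 0)
    (k : Fin n) (hk : 0 < x k) : A.mulVec x k = 0 := by
  obtain ⟨hsym, hcop⟩ := hA
  apply quad_zero (A k k) (A.mulVec x k) (x k) hk
  intro t ht
  have hnn : ∀ i, 0 ≤ x i + t * (Pi.single k 1 : Fin n → ℝ) i := by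
    intro i
    by_cases hik : i = k
    · subst hik; simp; linarith
    · simp [Pi.single_apply, hik, hx i]
  have := hcop (fun i => x i + t * (Pi.single k 1 : Fin n → ℝ) i) hnn
  have hexp : (fun i => x i + t * (Pi.single k 1 : Fin n → ℝ) i) ⬝ᵥ
      A.mulVec (fun i => x i + t * (Pi.single k 1 : Fin n → ℝ) i)
      = x ⬝ᵥ A.mulVec x + A k k * t ^ 2 + 2 * A.mulVec x k * t := by
    have h1 : (fun i => x i + t * (Pi.single k 1 : Fin n → ℝ) i)
        = x + t • (Pi.single k 1 : Fin n → ℝ) := by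
      funext i; simp [Pi.add_apply, Pi.smul_apply, smul_eq_mul]
    rw [h1, Matrix.mulVec_add, Matrix.mulVec_smul, dotProduct_add, add_dotProduct,
      add_dotProduct, smul_dotProduct, dotProduct_smul, dotProduct_smul]
    have e1 : Pi.single k (1:ℝ) ⬝ᵥ A.mulVec x = A.mulVec x k := by
      simp [dotProduct, Pi.single_apply, Finset.sum_ite_eq']
    have e2 : A.mulVec (Pi.single k (1:ℝ)) = fun i => A i k := by
      funext i; simp [Matrix.mulVec, dotProduct, Pi.single_apply]
    have e3 : x ⬝ᵥ A.mulVec (Pi.single k (1:ℝ)) = A.mulVec x k := by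
      rw [e2]
      have : ∀ i, A i k = A k i := by
        intro i
        have := congrFun (congrFun hsym k) i
        simpa [Matrix.transpose_apply] using this
      simp only [dotProduct, Matrix.mulVec, this]
      exact Finset.sum_congr rfl fun i _ => mul_comm _ _
    have e4 : Pi.single k (1:ℝ) ⬝ᵥ A.mulVec (Pi.single k (1:ℝ)) = A k k := by
      rw [e2]; simp [dotProduct, Pi.single_apply, Finset.sum_ite_eq']
    rw [e1, e3]
    simp only [smul_dotProduct, dotProduct_smul, smul_eq_mul, e4]
    ring
  rw [hexp, hxAx] at this
  linarith

theorem stmt0 {n : ℕ} (M A : Matrix (Fin n) (Fin n) ℝ)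
    (hM : CompletelyPositive M) (hA : Copositive A)
    (horth : Matrix.trace (Mᵀ * A) = 0) :
    ∀ i : Fin n, (fun k => M k i) ⬝ᵥ (fun k => A k i) = 0 := by
  obtain ⟨p, v, hv, hMeq⟩ := hM
  have hsym := hA.1
  have hAsym : ∀ i k, A k i = A i k := by
    intro i k
    have := congrFun (congrFun hsym i) k
    simpa [Matrix.transpose_apply] using this
  have hMent : ∀ k i, M k i = ∑ j, v j k * v j i := by
    intro k i
    rw [hMeq]
    simp [Matrix.sum_apply, Matrix.vecMulVec_apply]
  have htr : Matrix.trace (Mᵀ * A) = ∑ j, v j ⬝ᵥ A.mulVec (v j) := by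
    rw [Matrix.trace]
    simp only [Matrix.diag_apply, Matrix.mul_apply, Matrix.transpose_apply]
    rw [Finset.sum_comm]
    calc ∑ k, ∑ i, M k i * A k i
        = ∑ k, ∑ i, ∑ j, v j k * v j i * A k i := by
          refine Finset.sum_congr rfl fun k _ => Finset.sum_congr rfl fun i _ => ?_
          rw [hMent, Finset.sum_mul]
      _ = ∑ k, ∑ j, ∑ i, v j k * v j i * A k i :=
          Finset.sum_congr rfl fun k _ => Finset.sum_comm
      _ = ∑ j, ∑ k, ∑ i, v j k * v j i * A k i := Finset.sum_comm
      _ = ∑ j, v j ⬝ᵥ A.mulVec (v j) := by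
          refine Finset.sum_congr rfl fun j _ => ?_
          simp only [dotProduct, Matrix.mulVec, Finset.mul_sum]
          ring_nf
          refine Finset.sum_congr rfl fun k _ => Finset.sum_congr rfl fun i _ => ?_
          rw [hAsym i k]; ring
  have hterm0 : ∀ j, v j ⬝ᵥ A.mulVec (v j) = 0 := by
    have hsum0 : ∑ j, v j ⬝ᵥ A.mulVec (v j) = 0 := by rw [← htr, horth]
    intro j
    exact (Finset.sum_eq_zero_iff_of_nonneg
      (fun j _ => hA.2 (v j) (hv j))).mp hsum0 j (Finset.mem_univ j)
  intro i
  simp only [dotProduct]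
  calc ∑ k, M k i * A k i
      = ∑ k, ∑ j, v j k * v j i * A k i := by
        refine Finset.sum_congr rfl fun k _ => ?_
        rw [hMent, Finset.sum_mul]
    _ = ∑ j, v j i * A.mulVec (v j) i := by
        rw [Finset.sum_comm]
        refine Finset.sum_congr rfl fun j _ => ?_
        simp only [Matrix.mulVec, dotProduct, Finset.mul_sum]
        refine Finset.sum_congr rfl fun k _ => ?_
        rw [hAsym i k]; ring
    _ = 0 := by
        refine Finset.sum_eq_zero fun j _ => ?_
        rcases (hv j i).lt_or_eq with h | h
        · rw [key A hA (v j) (hv j) (hterm0 j) i h, mul_zero]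
        · rw [← h, zero_mul]
end

section
/- Let M be a completely positive n×n matrix orthogonal to a copositive n×n matrix A, and let M = Σ_{j=1}^p x_j x_jᵀ be a cp decomposition with nonnegative vectors x_j. If some index i lies in the support of every x_j (1 ≤ j ≤ p), then the i-th column of A is in the nullspace of M, i.e., M A e_i = 0. -/
open Matrix BigOperators

/-!
If `M = ∑ⱼ xⱼ xⱼᵀ` is orthogonal to the copositive `A`, the nonnegative terms `xⱼᵀ A xⱼ` of
`⟨M, A⟩` all vanish, so each `xⱼ` minimizes the quadratic form of `A` over the nonnegative orthant.
Moving `xⱼ` along `eᵢ` keeps it nonnegative for small steps of either sign when `xⱼ i > 0`, so the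
derivative `2 (A xⱼ)ᵢ` of the form in that direction vanishes. Hence `xⱼᵀ A eᵢ = 0` for every `j`,
and `M A eᵢ = ∑ⱼ (xⱼᵀ A eᵢ) xⱼ = 0`.
-/

open Filter Topology

theorem eq_zero_of_eventually_nonneg_mul_add_mul_sq {a b : ℝ}
    (h : ∀ᶠ t in 𝓝 0, 0 ≤ b * t + a * t ^ 2) : b = 0 := by
  have hmin : IsLocalMin (fun t => b * t + a * t ^ 2) 0 := by simpa [IsLocalMin, IsMinFilter]
  have hderiv : HasDerivAt (fun t => b * t + a * t ^ 2) (b * 1 + a * (2 * 0 ^ 1)) 0 :=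
    ((hasDerivAt_id 0).const_mul b).add ((hasDerivAt_pow 2 0).const_mul a)
  simpa using hmin.hasDerivAt_eq_zero hderiv

theorem Matrix.IsSymm.dotProduct_mulVec_add_smul_single {ι R : Type*} [Fintype ι] [DecidableEq ι]
    [CommRing R] {A : Matrix ι ι R} (hA : A.IsSymm) (s : ι → R) (i : ι) (t : R) :
    (s + t • Pi.single i 1) ⬝ᵥ A *ᵥ (s + t • Pi.single i 1) =
      s ⬝ᵥ A *ᵥ s + 2 * t * (A *ᵥ s) i + t ^ 2 * A i i := by
  have hleft : Pi.single i 1 ⬝ᵥ A *ᵥ s = (A *ᵥ s) i := by simp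
  have hright : s ⬝ᵥ A.col i = (A *ᵥ s) i := by
    rw [← mulVec_single_one, dotProduct_mulVec, dotProduct_single, mul_one, ← mulVec_transpose,
      hA.eq]
  simp only [mulVec_add, mulVec_smul, add_dotProduct, dotProduct_add, smul_dotProduct,
    dotProduct_smul, hleft, hright, single_dotProduct, mulVec_single_one, col_apply, smul_eq_mul]
  ring

theorem Copositive.mulVec_apply_eq_zero {ι : Type} [Fintype ι] [DecidableEq ι]
    {A : Matrix ι ι ℝ} (hA : Copositive A) {s : ι → ℝ} (hs : ∀ k, 0 ≤ s k)
    (hq : s ⬝ᵥ A *ᵥ s = 0) {i : ι} (hi : 0 < s i) : (A *ᵥ s) i = 0 := by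
  suffices h : 2 * (A *ᵥ s) i = 0 by linarith
  refine eq_zero_of_eventually_nonneg_mul_add_mul_sq (a := A i i) ?_
  filter_upwards [Ioi_mem_nhds (neg_lt_zero.2 hi)] with t ht
  have hnonneg : ∀ k, 0 ≤ (s + t • Pi.single i 1 : ι → ℝ) k := by
    intro k
    by_cases hk : k = i
    · subst hk
      have : -s k < t := ht
      simp only [Pi.add_apply, Pi.smul_apply, Pi.single_eq_same, smul_eq_mul, mul_one]
      linarith
    · simpa [hk] using hs k
  have hcop := hA.2 _ hnonneg
  rw [hA.1.dotProduct_mulVec_add_smul_single, hq] at hcop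
  linarith

theorem Copositive.dotProduct_mulVec_eq_zero_of_trace_eq_zero {ι κ : Type} [Fintype ι]
    [Fintype κ] {A : Matrix ι ι ℝ} (hA : Copositive A) {x : κ → ι → ℝ} (hx : ∀ j i, 0 ≤ x j i)
    (horth : trace ((∑ j, vecMulVec (x j) (x j))ᵀ * A) = 0) (j : κ) :
    x j ⬝ᵥ A *ᵥ x j = 0 := by
  have htrace : trace ((∑ j, vecMulVec (x j) (x j))ᵀ * A) = ∑ j, x j ⬝ᵥ A *ᵥ x j := by
    simp only [transpose_sum, transpose_vecMulVec, Finset.sum_mul, trace_sum, vecMulVec_mul,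
      trace_vecMulVec, dotProduct_mulVec, dotProduct_comm (x _ ᵥ* A)]
  rw [htrace] at horth
  exact (Finset.sum_eq_zero_iff_of_nonneg fun j _ => hA.2 (x j) (hx j)).1 horth j
    (Finset.mem_univ j)

theorem stmt1 {n p : ℕ} (M A : Matrix (Fin n) (Fin n) ℝ) (x : Fin p → Fin n → ℝ)
    (hx : ∀ j i, 0 ≤ x j i) (hM : M = ∑ j, Matrix.vecMulVec (x j) (x j))
    (hA : Copositive A) (horth : Matrix.trace (Mᵀ * A) = 0)
    (i : Fin n) (hi : ∀ j, 0 < x j i) :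
    M.mulVec (fun k => A k i) = 0 := by
  subst hM
  have hcol : ∀ j, x j ⬝ᵥ (fun k => A k i) = 0 := fun j => by
    have hrow : (fun k => A k i) = A i := funext fun k => hA.1.apply i k
    rw [hrow, dotProduct_comm]
    exact hA.mulVec_apply_eq_zero (hx j)
      (hA.dotProduct_mulVec_eq_zero_of_trace_eq_zero hx horth j) (hi j)
  rw [sum_mulVec]
  exact Finset.sum_eq_zero fun j _ => by simp [vecMulVec_mulVec, hcol j]
end

section
/- If A is copositive, x is a nonnegative vector with xᵀ A x = 0, then (A x)_k = 0 for every k in the support of x. -/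
open Matrix BigOperators

theorem stmt2 {n : ℕ} (A : Matrix (Fin n) (Fin n) ℝ) (hA : Copositive A)
    (x : Fin n → ℝ) (hx : ∀ i, 0 ≤ x i) (h0 : x ⬝ᵥ A.mulVec x = 0) :
    ∀ k, 0 < x k → A.mulVec x k = 0 := by
  obtain ⟨hsym, hcop⟩ := hA
  -- Step 1: A.mulVec x i ≥ 0 for all i
  have key : ∀ i, 0 ≤ A.mulVec x i := by
    intro i
    by_contra hneg
    push_neg at hneg
    set c := A.mulVec x i with hc
    -- choose t > 0 with 2*t*c + t^2 * A i i < 0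
    have main : ∀ t : ℝ, 0 ≤ t →
        0 ≤ 2 * t * c + t ^ 2 * A i i := by
      intro t ht
      have hxy : ∀ j, 0 ≤ (x + t • (Pi.single i 1 : Fin n → ℝ)) j := by
        intro j
        have : 0 ≤ (t • (Pi.single i 1 : Fin n → ℝ)) j := by
          simp only [Pi.smul_apply, smul_eq_mul]
          have : (0:ℝ) ≤ (Pi.single i 1 : Fin n → ℝ) j := by
            by_cases h : j = i <;> simp [h, Pi.single_apply]
          positivity
        have := add_nonneg (hx j) this
        simpa using this
      have hq := hcop _ hxy
      have e1 : x ⬝ᵥ A.mulVec (Pi.single i 1) = c := by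
        rw [Matrix.dotProduct_mulVec, ← Matrix.mulVec_transpose, hsym.eq]
        simp [dotProduct_single, hc]
      have e2 : (Pi.single i 1 : Fin n → ℝ) ⬝ᵥ A.mulVec x = c := by
        simp [single_dotProduct, hc]
      have e3 : (Pi.single i 1 : Fin n → ℝ) ⬝ᵥ A.mulVec (Pi.single i 1) = A i i := by
        rw [single_dotProduct]
        simp [Matrix.mulVec_single]
      rw [Matrix.mulVec_add, Matrix.mulVec_smul, dotProduct_add,
        add_dotProduct, add_dotProduct, dotProduct_smul,
        smul_dotProduct, smul_dotProduct, dotProduct_smul] at hq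
      rw [h0, e1, e2, e3] at hq
      simp only [smul_eq_mul] at hq
      nlinarith [hq]
    by_cases hAii : A i i ≤ 0
    · have := main 1 zero_le_one
      nlinarith
    · push_neg at hAii
      have := main (-c / A i i) (le_of_lt (div_pos (by linarith) hAii))
      have h1 : 2 * (-c / A i i) * c + (-c / A i i) ^ 2 * A i i
          = - (c ^ 2 / A i i) := by field_simp; ring
      rw [h1] at this
      have hc2 : 0 < c ^ 2 := by nlinarith
      have h2 : 0 < c ^ 2 / A i i := div_pos hc2 hAii
      linarith
  -- Step 2: sum of nonneg terms is zero
  intro k hk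
  have hsum : ∑ i, x i * A.mulVec x i = 0 := by
    simpa [dotProduct] using h0
  have hterm : ∀ i ∈ Finset.univ, 0 ≤ x i * A.mulVec x i := fun i _ =>
    mul_nonneg (hx i) (key i)
  have hz := (Finset.sum_eq_zero_iff_of_nonneg hterm).mp hsum k (Finset.mem_univ k)
  rcases mul_eq_zero.mp hz with h | h
  · exact absurd h (ne_of_gt hk)
  · exact h
end

section
/- Suppose A ∈ ext(C_n) \ N_n (A generates an extreme ray of the copositive cone and has a negative entry) and A decomposes in block form A = [[S, R],[Rᵀ, Q]] with S symmetric of order k ≥ 1 and diag(Q) = 0. Then R = 0, Q = 0, and S is a nonzero extreme matrix of the copositive cone C_k. -/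
open Matrix BigOperators

section Aux
variable {ι : Type} [Fintype ι] [DecidableEq ι]

lemma quadform_single {A : Matrix ι ι ℝ} (p : ι) :
    (Pi.single p (1:ℝ)) ⬝ᵥ A.mulVec (Pi.single p 1) = A p p := by
  simp [Matrix.mulVec_single, single_dotProduct]

lemma quadform_two {A : Matrix ι ι ℝ} {p q : ι} (hpq : p ≠ q) (t c : ℝ) :
    (Pi.single p t + Pi.single q c) ⬝ᵥ A.mulVec (Pi.single p t + Pi.single q c)
      = A p p * t * t + (A p q + A q p) * (t * c) + A q q * c * c := by
  simp [Matrix.mulVec_add, Matrix.mulVec_single, dotProduct_add, add_dotProduct,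
    single_dotProduct, Pi.single_apply, hpq, hpq.symm]
  ring

lemma single_nonneg_fun {p : ι} {t : ℝ} (ht : 0 ≤ t) : ∀ i, 0 ≤ (Pi.single p t : ι → ℝ) i := by
  intro i
  rw [Pi.single_apply]
  split <;> simp [ht]

lemma cop_diag_nonneg {A : Matrix ι ι ℝ} (hA : Copositive A) (p : ι) : 0 ≤ A p p := by
  have := hA.2 (Pi.single p 1) (single_nonneg_fun zero_le_one)
  rwa [quadform_single] at this

lemma cop_entry_nonneg {A : Matrix ι ι ℝ} (hA : Copositive A) (p q : ι)
    (hq : A q q = 0) : 0 ≤ A p q := by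
  rcases eq_or_ne p q with rfl | hpq
  · exact le_of_eq hq.symm
  by_contra h
  push_neg at h
  have hApq : A q p = A p q := hA.1.apply p q
  have hApp : 0 ≤ A p p := cop_diag_nonneg hA p
  set c : ℝ := (A p p + 1) / (-A p q) with hc
  have hcpos : 0 < c := div_pos (by linarith) (by linarith)
  have hform := hA.2 (Pi.single p 1 + Pi.single q c)
    (fun i => add_nonneg (single_nonneg_fun zero_le_one i) (single_nonneg_fun hcpos.le i))
  rw [quadform_two hpq] at hform
  have hne : -A p q ≠ 0 := by linarith
  have hmul : c * (-A p q) = A p p + 1 := div_mul_cancel₀ _ hne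
  rw [hApq, hq] at hform
  nlinarith

lemma copositive_of_nonneg {A : Matrix ι ι ℝ} (hsymm : A.IsSymm)
    (h : ∀ i j, 0 ≤ A i j) : Copositive A := by
  refine ⟨hsymm, fun x hx => ?_⟩
  simp only [dotProduct, Matrix.mulVec]
  refine Finset.sum_nonneg fun i _ => mul_nonneg (hx i) ?_
  exact Finset.sum_nonneg fun j _ => mul_nonneg (h i j) (hx j)

end Aux

section Blocks
variable {k l : ℕ}

lemma cop_fromBlocks_zero {B : Matrix (Fin k) (Fin k) ℝ} (hB : Copositive B) :
    Copositive (Matrix.fromBlocks B 0 0 (0 : Matrix (Fin l) (Fin l) ℝ)) := by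
  constructor
  · rw [Matrix.IsSymm, Matrix.fromBlocks_transpose, hB.1]
    simp
  · intro x hx
    rw [← Sum.elim_comp_inl_inr x, Matrix.fromBlocks_mulVec]
    simp only [Matrix.zero_mulVec, add_zero, zero_add, sumElim_dotProduct_sumElim,
      dotProduct_zero]
    simpa using hB.2 (x ∘ Sum.inl) (fun i => hx _)

lemma cop_block₁₁ {S : Matrix (Fin k) (Fin k) ℝ} {R : Matrix (Fin k) (Fin l) ℝ}
    {Q : Matrix (Fin l) (Fin l) ℝ} (h : Copositive (Matrix.fromBlocks S R Rᵀ Q)) :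
    Copositive S := by
  constructor
  · ext i j
    have := h.1.apply (Sum.inl i) (Sum.inl j)
    simpa using this
  · intro x hx
    have hy : ∀ i : Fin k ⊕ Fin l, 0 ≤ Sum.elim x (0 : Fin l → ℝ) i := by
      rintro (i | i)
      · exact hx i
      · exact le_refl 0
    have := h.2 (Sum.elim x 0) hy
    rw [Matrix.fromBlocks_mulVec] at this
    simp only [Sum.elim_comp_inl, Sum.elim_comp_inr, Matrix.mulVec_zero, add_zero,
      sumElim_dotProduct_sumElim, zero_dotProduct] at this
    exact this

end Blocks


theorem stmt7 {k l : ℕ} (hk : 1 ≤ k)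
    (S : Matrix (Fin k) (Fin k) ℝ) (R : Matrix (Fin k) (Fin l) ℝ)
    (Q : Matrix (Fin l) (Fin l) ℝ) (hQ : ∀ j, Q j j = 0)
    (hext : ExtremeCopositive (Matrix.fromBlocks S R Rᵀ Q))
    (hneg : ∃ i j, Matrix.fromBlocks S R Rᵀ Q i j < 0) :
    R = 0 ∧ Q = 0 ∧ S ≠ 0 ∧ ExtremeCopositive S := by
  have hA : Copositive (Matrix.fromBlocks S R Rᵀ Q) := hext.1
  have hdiag : ∀ j : Fin l, Matrix.fromBlocks S R Rᵀ Q (Sum.inr j) (Sum.inr j) = 0 := by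
    intro j; simpa using hQ j
  -- every entry in a column indexed by Sum.inr is nonnegative
  have hcol : ∀ (p : Fin k ⊕ Fin l) (j : Fin l),
      0 ≤ Matrix.fromBlocks S R Rᵀ Q p (Sum.inr j) :=
    fun p j => cop_entry_nonneg hA p (Sum.inr j) (hdiag j)
  have hrow : ∀ (j : Fin l) (p : Fin k ⊕ Fin l),
      0 ≤ Matrix.fromBlocks S R Rᵀ Q (Sum.inr j) p := by
    intro j p
    have := hA.1.apply (Sum.inr j) p
    rw [← this]
    exact hcol p j
  have hRnn : ∀ i j, 0 ≤ R i j := by intro i j; simpa using hcol (Sum.inl i) j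
  have hQnn : ∀ i j, 0 ≤ Q i j := by intro i j; simpa using hcol (Sum.inr i) j
  -- locate the negative entry in the S-block
  obtain ⟨p, q, hpq⟩ := hneg
  obtain ⟨i₀, rfl⟩ : ∃ i : Fin k, p = Sum.inl i := by
    cases p with
    | inl i => exact ⟨i, rfl⟩
    | inr j => exact absurd hpq (not_lt.2 (hrow j q))
  obtain ⟨j₀, rfl⟩ : ∃ j : Fin k, q = Sum.inl j := by
    cases q with
    | inl j => exact ⟨j, rfl⟩
    | inr j => exact absurd hpq (not_lt.2 (hcol (Sum.inl i₀) j))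
  have hSneg : S i₀ j₀ < 0 := by simpa using hpq
  -- decompose A = B + C
  have hScop : Copositive S := cop_block₁₁ hA
  have hBcop : Copositive (Matrix.fromBlocks S 0 0 (0 : Matrix (Fin l) (Fin l) ℝ)) :=
    cop_fromBlocks_zero hScop
  have hCcop : Copositive (Matrix.fromBlocks (0 : Matrix (Fin k) (Fin k) ℝ) R Rᵀ Q) := by
    apply copositive_of_nonneg
    · ext a b
      have h1 := hA.1.apply a b
      cases a <;> cases b <;>
        simp_all [Matrix.fromBlocks, Matrix.IsSymm, Matrix.transpose_apply]
    · rintro (a | a) (b | b) <;>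
        simp [Matrix.fromBlocks, hRnn, hQnn]
  have hsum : Matrix.fromBlocks S R Rᵀ Q =
      Matrix.fromBlocks S 0 0 (0 : Matrix (Fin l) (Fin l) ℝ) +
      Matrix.fromBlocks (0 : Matrix (Fin k) (Fin k) ℝ) R Rᵀ Q := by
    rw [Matrix.fromBlocks_add]
    simp
  obtain ⟨s, t, hs, ht, hB, hC⟩ := hext.2.2 _ _ hBcop hCcop hsum
  -- t = 0
  have ht0 : t = 0 := by
    have := congrFun (congrFun hC (Sum.inl i₀)) (Sum.inl j₀)
    simp only [Matrix.fromBlocks_apply₁₁, Matrix.smul_apply, Matrix.zero_apply,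
      smul_eq_mul] at this
    rcases mul_eq_zero.1 this.symm with h | h
    · exact h
    · exact absurd h (ne_of_lt hSneg)
  rw [ht0, zero_smul] at hC
  have hR0 : R = 0 := by
    ext i j
    have := congrFun (congrFun hC (Sum.inl i)) (Sum.inr j)
    simpa using this
  have hQ0 : Q = 0 := by
    ext i j
    have := congrFun (congrFun hC (Sum.inr i)) (Sum.inr j)
    simpa using this
  have hS0 : S ≠ 0 := by
    intro h
    rw [h] at hSneg
    simp at hSneg
  refine ⟨hR0, hQ0, hS0, hScop, hS0, ?_⟩
  intro B' C' hB' hC' hsum'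
  have hA0 : Matrix.fromBlocks S R Rᵀ Q =
      Matrix.fromBlocks B' 0 0 (0 : Matrix (Fin l) (Fin l) ℝ) +
      Matrix.fromBlocks C' 0 0 (0 : Matrix (Fin l) (Fin l) ℝ) := by
    rw [Matrix.fromBlocks_add, hR0, hQ0, ← hsum']
    simp
  obtain ⟨s', t', hs', ht', h1, h2⟩ := hext.2.2 _ _
    (cop_fromBlocks_zero hB') (cop_fromBlocks_zero hC') hA0
  refine ⟨s', t', hs', ht', ?_, ?_⟩
  · ext i j
    have := congrFun (congrFun h1 (Sum.inl i)) (Sum.inl j)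
    simpa using this
  · ext i j
    have := congrFun (congrFun h2 (Sum.inl i)) (Sum.inl j)
    simpa using this
end

section
/- Let A generate an extreme ray of the copositive cone C_n. Then rank A = 1 if and only if A is positive semidefinite. -/
open Matrix BigOperators

/-!
If `A` is positive semidefinite, choose `i` with `A i i > 0` and let `a` be the `i`-th row. Then
`A = a aᵀ / A i i + (A - a aᵀ / A i i)` with both summands positive semidefinite (the second is a
Schur complement), hence copositive; extremality forces `A = a aᵀ / A i i`, of rank one.
Conversely, a symmetric matrix of rank one has a single nonzero eigenvalue, equal to its trace,
which is nonnegative because copositivity makes the diagonal nonnegative.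
-/

open scoped ComplexOrder

namespace Matrix

variable {ι : Type*} [Fintype ι]

lemma rank_eq_zero_iff {m K : Type*} [Field K] {A : Matrix m ι K} : A.rank = 0 ↔ A = 0 := by
  classical
  rw [rank, Submodule.finrank_eq_zero, LinearMap.range_eq_bot, ← toLin'_apply',
    map_eq_zero_iff _ toLin'.injective]

lemma IsHermitian.posSemidef_of_rank_le_one {𝕜 : Type*} [RCLike 𝕜] [DecidableEq ι]
    {A : Matrix ι ι 𝕜} (hA : A.IsHermitian) (hrank : A.rank ≤ 1) (htrace : 0 ≤ A.trace) :
    A.PosSemidef := by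
  rw [hA.posSemidef_iff_eigenvalues_nonneg]
  intro i
  by_contra! hneg
  have hzero : ∀ j ≠ i, hA.eigenvalues j = 0 := by
    intro j hj
    by_contra hj0
    rw [hA.rank_eq_card_non_zero_eigs, Fintype.card_le_one_iff] at hrank
    exact hj (congrArg Subtype.val (hrank ⟨j, hj0⟩ ⟨i, hneg.ne⟩))
  rw [hA.trace_eq_sum_eigenvalues, Finset.sum_eq_single i (fun j _ hj ↦ by simp [hzero j hj])
    (by simp), RCLike.ofReal_nonneg] at htrace
  exact htrace.not_gt hneg

lemma posSemidef_vecMulVec_self (a : ι → ℝ) : (vecMulVec a a).PosSemidef := by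
  simpa using posSemidef_vecMulVec_self_star a

lemma PosSemidef.dotProduct_mulVec_sq_le {A : Matrix ι ι ℝ} (hA : A.PosSemidef) (x y : ι → ℝ) :
    (x ⬝ᵥ A *ᵥ y) ^ 2 ≤ (x ⬝ᵥ A *ᵥ x) * (y ⬝ᵥ A *ᵥ y) := by
  let := A.toSeminormedAddCommGroup hA
  let := A.toInnerProductSpace hA
  have := real_inner_mul_inner_self_le x y
  change (A *ᵥ y ⬝ᵥ star x) * (A *ᵥ y ⬝ᵥ star x) ≤ (A *ᵥ x ⬝ᵥ star x) * (A *ᵥ y ⬝ᵥ star y) at this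
  simpa only [star_trivial, dotProduct_comm _ x, dotProduct_comm _ y, sq] using this

lemma PosSemidef.sub_smul_vecMulVec_row {A : Matrix ι ι ℝ} (hA : A.PosSemidef) {i : ι}
    (hi : 0 < A i i) : (A - (A i i)⁻¹ • vecMulVec (A i) (A i)).PosSemidef := by
  classical
  have hrankOne := (posSemidef_vecMulVec_self (A i)).smul (inv_nonneg.2 hi.le)
  rw [posSemidef_iff_dotProduct_mulVec]
  refine ⟨hA.isHermitian.sub hrankOne.isHermitian, fun x ↦ ?_⟩
  have hcs := hA.dotProduct_mulVec_sq_le x (Pi.single i 1)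
  have hcol : A.col i = A i := congrFun (hA.isHermitian : Aᵀ = A) i
  simp only [mulVec_single, MulOpposite.op_one, hcol, one_smul, single_dotProduct, one_mul,
    star_trivial, sub_mulVec, smul_mulVec, vecMulVec_mulVec, op_smul_eq_smul, dotProduct_sub,
    dotProduct_smul, smul_eq_mul, sub_nonneg] at hcs ⊢
  rw [dotProduct_comm, inv_mul_le_iff₀ hi]
  linarith

end Matrix

lemma Matrix.PosSemidef.copositive {ι : Type} [Fintype ι] {A : Matrix ι ι ℝ} (hA : A.PosSemidef) :
    Copositive A :=
  ⟨hA.isHermitian, fun x _ ↦ by simpa using hA.dotProduct_mulVec_nonneg x⟩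

namespace Copositive

variable {ι : Type} [Fintype ι] {A : Matrix ι ι ℝ}

lemma diag_nonneg (hA : Copositive A) (i : ι) : 0 ≤ A i i := by
  classical
  simpa using hA.2 (Pi.single i 1) (Pi.single_nonneg.2 zero_le_one : (0 : ι → ℝ) ≤ Pi.single i 1)

lemma trace_nonneg (hA : Copositive A) : 0 ≤ A.trace :=
  Finset.sum_nonneg fun i _ ↦ hA.diag_nonneg i

end Copositive

lemma ExtremeCopositive.eq_of_diag_eq {ι : Type} [Fintype ι] {A B : Matrix ι ι ℝ}
    (hA : ExtremeCopositive A) (hB : Copositive B) (hAB : Copositive (A - B)) {i : ι}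
    (hi : A i i ≠ 0) (hBi : B i i = A i i) : B = A := by
  obtain ⟨s, -, -, -, hs, -⟩ := hA.2.2 B (A - B) hB hAB (add_sub_cancel B A).symm
  have hs1 : s = 1 := by
    have := congrFun (congrFun hs i) i
    rw [hBi, Matrix.smul_apply, smul_eq_mul] at this
    exact (mul_eq_right₀ hi).1 this.symm
  rw [hs, hs1, one_smul]

theorem stmt8 {n : ℕ} (A : Matrix (Fin n) (Fin n) ℝ) (hext : ExtremeCopositive A) :
    A.rank = 1 ↔ A.PosSemidef := by
  have hcop := hext.1
  have hA : A.IsHermitian := hcop.1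
  refine ⟨fun hrank ↦ hA.posSemidef_of_rank_le_one hrank.le hcop.trace_nonneg, fun hpsd ↦ ?_⟩
  obtain ⟨i, hi⟩ : ∃ i, A i i ≠ 0 := by
    by_contra! h
    exact hext.2.1 (hpsd.trace_eq_zero_iff.1 (Finset.sum_eq_zero fun i _ ↦ h i))
  have hipos : 0 < A i i := (hcop.diag_nonneg i).lt_of_ne' hi
  have hBA : (A i i)⁻¹ • vecMulVec (A i) (A i) = A := hext.eq_of_diag_eq
    ((posSemidef_vecMulVec_self (A i)).smul (inv_nonneg.2 hipos.le)).copositive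
    (hpsd.sub_smul_vecMulVec_row hipos).copositive hi
    (by simp [vecMulVec_apply, inv_mul_cancel_left₀ hi])
  have hle : A.rank ≤ 1 := by
    rw [← hBA, ← smul_vecMulVec]
    exact rank_vecMulVec_le _ _
  have hne : A.rank ≠ 0 := fun h ↦ hext.2.1 (rank_eq_zero_iff.1 h)
  omega
end

section
/- Let p_n denote the maximal cp-rank over completely positive n×n matrices. For every k with 1 ≤ k ≤ p_n there exists a matrix M_k on the boundary of the completely positive cone CP_n with cp-rank(M_k) = k. -/
open Matrix BigOperators

lemma cpRank_le {ι : Type} [Fintype ι] {M : Matrix ι ι ℝ} {p : ℕ}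
    (v : Fin p → ι → ℝ) (hv : ∀ j i, 0 ≤ v j i)
    (hM : M = ∑ j, Matrix.vecMulVec (v j) (v j)) : cpRank M ≤ p :=
  Nat.sInf_le ⟨v, hv, hM⟩

lemma exists_min_decomp {ι : Type} [Fintype ι] {M : Matrix ι ι ℝ}
    (h : CompletelyPositive M) :
    ∃ v : Fin (cpRank M) → ι → ℝ, (∀ j i, 0 ≤ v j i) ∧
      M = ∑ j, Matrix.vecMulVec (v j) (v j) := by
  obtain ⟨p, v, hv, hM⟩ := h
  exact Nat.sInf_mem (⟨p, v, hv, hM⟩ : {p : ℕ | ∃ v : Fin p → ι → ℝ,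
    (∀ j i, 0 ≤ v j i) ∧ M = ∑ j, Matrix.vecMulVec (v j) (v j)}.Nonempty)

theorem stmt12 {n : ℕ}
    (hattain : ∃ M ∈ frontier {B : Matrix (Fin n) (Fin n) ℝ | CompletelyPositive B},
      CompletelyPositive M ∧ cpRank M = pmax n) :
    ∀ k : ℕ, 1 ≤ k → k ≤ pmax n →
      ∃ Mk ∈ frontier {B : Matrix (Fin n) (Fin n) ℝ | CompletelyPositive B},
        CompletelyPositive Mk ∧ cpRank Mk = k := by
  obtain ⟨M, hMfr, hMcp, hMrank⟩ := hattain
  intro k hk1 hkp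
  obtain ⟨v, hv, hM⟩ := exists_min_decomp hMcp
  rw [← hMrank] at hkp
  have hkpk : k + (cpRank M - k) = cpRank M := Nat.add_sub_cancel' hkp
  set e : Fin (k + (cpRank M - k)) ≃ Fin (cpRank M) := finCongr hkpk with he
  set w : Fin (k + (cpRank M - k)) → Fin n → ℝ := fun j => v (e j) with hw
  have hMsum : M = ∑ j, Matrix.vecMulVec (w j) (w j) :=
    hM.trans (Equiv.sum_comp e (fun j => Matrix.vecMulVec (v j) (v j))).symm
  set Mk : Matrix (Fin n) (Fin n) ℝ :=
    ∑ j : Fin k, Matrix.vecMulVec (w (Fin.castAdd (cpRank M - k) j))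
      (w (Fin.castAdd (cpRank M - k) j)) with hMk
  set R : Matrix (Fin n) (Fin n) ℝ :=
    ∑ j : Fin (cpRank M - k), Matrix.vecMulVec (w (Fin.natAdd k j))
      (w (Fin.natAdd k j)) with hR
  have hsplit : M = Mk + R :=
    hMsum.trans (Fin.sum_univ_add fun j => Matrix.vecMulVec (w j) (w j))
  have hMkcp : CompletelyPositive Mk :=
    ⟨k, fun j => w (Fin.castAdd (cpRank M - k) j), fun j i => hv _ _, hMk⟩
  have hle : cpRank Mk ≤ k := cpRank_le _ (fun j i => hv _ _) hMk
  have hge : k ≤ cpRank Mk := by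
    by_contra hlt
    push_neg at hlt
    obtain ⟨u, hu, hMku⟩ := exists_min_decomp hMkcp
    set z : Fin (cpRank Mk + (cpRank M - k)) → Fin n → ℝ :=
      Fin.append u (fun j => w (Fin.natAdd k j)) with hz
    have hzpos : ∀ j i, 0 ≤ z j i := by
      intro j i
      induction j using Fin.addCases with
      | left j => rw [hz, Fin.append_left]; exact hu j i
      | right j => rw [hz, Fin.append_right]; exact hv _ _
    have hz2 : (∑ j, Matrix.vecMulVec (z j) (z j)) = Mk + R := by
      rw [Fin.sum_univ_add]
      congr 1
      · exact (Finset.sum_congr rfl (fun j _ => by rw [hz, Fin.append_left])).trans hMku.symm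
      · exact (Finset.sum_congr rfl (fun j _ => by rw [hz, Fin.append_right])).trans hR.symm
    have hle2 : cpRank M ≤ cpRank Mk + (cpRank M - k) :=
      cpRank_le z hzpos (hsplit.trans hz2.symm)
    omega
  have hCPadd : ∀ A : Matrix (Fin n) (Fin n) ℝ, CompletelyPositive A →
      CompletelyPositive (A + R) := by
    rintro A ⟨q, a, ha, hA⟩
    refine ⟨q + (cpRank M - k), Fin.append a (fun j => w (Fin.natAdd k j)), ?_, ?_⟩
    · intro j i
      induction j using Fin.addCases with
      | left j => rw [Fin.append_left]; exact ha j i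
      | right j => rw [Fin.append_right]; exact hv _ _
    · rw [hA, hR, Fin.sum_univ_add]
      congr 1
      · exact Finset.sum_congr rfl (fun j _ => by rw [Fin.append_left])
      · exact Finset.sum_congr rfl (fun j _ => by rw [Fin.append_right])
  have hnotint : Mk ∉ interior {B : Matrix (Fin n) (Fin n) ℝ | CompletelyPositive B} := by
    intro hint
    have hMint : M ∈ interior {B : Matrix (Fin n) (Fin n) ℝ | CompletelyPositive B} := by
      have himg : (fun x => x + R) ''
          interior {B : Matrix (Fin n) (Fin n) ℝ | CompletelyPositive B}
          ⊆ interior {B : Matrix (Fin n) (Fin n) ℝ | CompletelyPositive B} := by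
        apply interior_maximal
        · rintro x ⟨y, hy, rfl⟩
          have hy' : y ∈ {B : Matrix (Fin n) (Fin n) ℝ | CompletelyPositive B} :=
            interior_subset hy
          exact hCPadd y hy'
        · exact (Homeomorph.addRight R).isOpenMap _ isOpen_interior
      exact hsplit ▸ himg ⟨Mk, hint, rfl⟩
    exact hMfr.2 hMint
  exact ⟨Mk, ⟨subset_closure hMkcp, hnotint⟩, hMkcp, le_antisymm hle hge⟩
end

section
/- If M is a completely positive n×n matrix with at least one zero entry, then cp-rank(M) ≤ 2 p_{n−1}, where p_{n−1} is the maximal cp-rank over completely positive (n−1)×(n−1) matrices. -/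
open Matrix BigOperators

section Factorization

variable {ι : Type}

def HasCPFactorization (M : Matrix ι ι ℝ) (p : ℕ) : Prop :=
  ∃ v : Fin p → ι → ℝ, (∀ j i, 0 ≤ v j i) ∧ M = ∑ j, vecMulVec (v j) (v j)

lemma cpRank_le_of_hasCPFactorization [Fintype ι] {M : Matrix ι ι ℝ} {p : ℕ}
    (h : HasCPFactorization M p) : cpRank M ≤ p :=
  Nat.sInf_le h

lemma CompletelyPositive.hasCPFactorization_cpRank [Fintype ι] {M : Matrix ι ι ℝ}
    (hM : CompletelyPositive M) : HasCPFactorization M (cpRank M) :=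
  Nat.sInf_mem hM

lemma hasCPFactorization_sum {κ : Type*} [Fintype κ] (v : κ → ι → ℝ)
    (hv : ∀ k i, 0 ≤ v k i) :
    HasCPFactorization (∑ k, vecMulVec (v k) (v k)) (Fintype.card κ) :=
  let e := (Fintype.equivFin κ).symm
  ⟨fun j => v (e j), fun j => hv (e j), (e.sum_comp fun k => vecMulVec (v k) (v k)).symm⟩

lemma HasCPFactorization.add {A B : Matrix ι ι ℝ} {p q : ℕ} (hA : HasCPFactorization A p)
    (hB : HasCPFactorization B q) : HasCPFactorization (A + B) (p + q) := by
  obtain ⟨va, hva, rfl⟩ := hA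
  obtain ⟨vb, hvb, rfl⟩ := hB
  have h := hasCPFactorization_sum (Sum.elim va vb) (by rintro (k | k) <;> simp [hva, hvb])
  simpa [Fintype.sum_sum_type] using h

lemma cpRank_add_le [Fintype ι] {A B : Matrix ι ι ℝ} (hA : CompletelyPositive A)
    (hB : CompletelyPositive B) : cpRank (A + B) ≤ cpRank A + cpRank B :=
  cpRank_le_of_hasCPFactorization (hA.hasCPFactorization_cpRank.add hB.hasCPFactorization_cpRank)

lemma CompletelyPositive.submatrix {κ : Type} [Fintype κ] [Fintype ι] {M : Matrix ι ι ℝ}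
    (hM : CompletelyPositive M) (f : κ → ι) : CompletelyPositive (M.submatrix f f) := by
  obtain ⟨p, v, hv, rfl⟩ := hM
  refine ⟨p, fun k => v k ∘ f, fun k i => hv k (f i), ?_⟩
  ext i j
  simp [Matrix.sum_apply, vecMulVec_apply]

end Factorization

section SumVecMulVec

variable {κ ι : Type*} [Fintype κ]

lemma sum_vecMulVec_apply (v : κ → ι → ℝ) (a b : ι) :
    (∑ k, vecMulVec (v k) (v k)) a b = ∑ k, v k a * v k b := by
  simp [Matrix.sum_apply, vecMulVec_apply]

lemma sum_vecMulVec_apply_self_eq_zero_iff (v : κ → ι → ℝ) (a : ι) :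
    (∑ k, vecMulVec (v k) (v k)) a a = 0 ↔ ∀ k, v k a = 0 := by
  rw [sum_vecMulVec_apply, Finset.sum_eq_zero_iff_of_nonneg fun k _ => mul_self_nonneg (v k a)]
  simp

end SumVecMulVec

section Bounded

variable {ι : Type} [Fintype ι]

lemma CompletelyPositive.mem_convexHull {M : Matrix ι ι ℝ} (hM : CompletelyPositive M) :
    M ∈ convexHull ℝ {A | ∃ u : ι → ℝ, (∀ i, 0 ≤ u i) ∧ A = vecMulVec u u} := by
  obtain ⟨p, v, hv, rfl⟩ := hM
  rcases p.eq_zero_or_pos with rfl | hp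
  · exact subset_convexHull ℝ _ ⟨0, fun _ => le_rfl, by simp⟩
  have hp' : (p : ℝ) ≠ 0 := by positivity
  have hsum : ∑ j, vecMulVec (v j) (v j)
      = ∑ j : Fin p, (p : ℝ)⁻¹ • vecMulVec (√p • v j) (√p • v j) := by
    simp [smul_smul, Real.mul_self_sqrt, hp']
  rw [hsum]
  refine (convex_convexHull ℝ _).sum_mem (fun _ _ => by positivity) (by simp [hp'])
    fun j _ => subset_convexHull ℝ _ ⟨√p • v j, fun i => ?_, rfl⟩
  exact smul_nonneg (Real.sqrt_nonneg _) (hv j i)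

lemma cpRank_le_card_mul_card_add_one {M : Matrix ι ι ℝ} (hM : CompletelyPositive M) :
    cpRank M ≤ Fintype.card ι * Fintype.card ι + 1 := by
  obtain ⟨κ, _, z, w, hzS, hz, hw, -, rfl⟩ :=
    eq_pos_convex_span_of_mem_convexHull hM.mem_convexHull
  choose u hu hzu using fun k => hzS (Set.mem_range_self k)
  have hfactor : ∑ k, w k • z k = ∑ k, vecMulVec (√(w k) • u k) (√(w k) • u k) := by
    simp [hzu, smul_smul, Real.mul_self_sqrt (hw _).le]
  have hcard : Fintype.card κ ≤ Fintype.card ι * Fintype.card ι + 1 := by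
    have := hz.card_le_finrank_succ.trans
      (Nat.succ_le_succ (Submodule.finrank_le (vectorSpan ℝ (Set.range z))))
    simpa [Module.finrank_matrix] using this
  rw [hfactor]
  refine (cpRank_le_of_hasCPFactorization (hasCPFactorization_sum _ fun k i => ?_)).trans hcard
  exact smul_nonneg (Real.sqrt_nonneg _) (hu k i)

lemma cpRank_le_pmax {n : ℕ} {M : Matrix (Fin n) (Fin n) ℝ} (hM : CompletelyPositive M) :
    cpRank M ≤ pmax n := by
  refine le_csSup ⟨n * n + 1, ?_⟩ ⟨M, hM, rfl⟩
  rintro k ⟨N, hN, rfl⟩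
  simpa using cpRank_le_card_mul_card_add_one hN

end Bounded

lemma CompletelyPositive.exists_add_of_apply_eq_zero {ι : Type} [Fintype ι] {M : Matrix ι ι ℝ}
    (hM : CompletelyPositive M) {i j : ι} (hij : M i j = 0) :
    ∃ A B, CompletelyPositive A ∧ CompletelyPositive B ∧ A i i = 0 ∧ B j j = 0 ∧ M = A + B := by
  obtain ⟨p, v, hv, rfl⟩ := hM
  have hprod : ∀ k, v k i * v k j = 0 := by
    rw [sum_vecMulVec_apply, Finset.sum_eq_zero_iff_of_nonneg
      fun k _ => mul_nonneg (hv k i) (hv k j)] at hij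
    exact fun k => hij k (Finset.mem_univ k)
  let va : Fin p → ι → ℝ := fun k => if v k i = 0 then v k else 0
  let vb : Fin p → ι → ℝ := fun k => if v k i = 0 then 0 else v k
  refine ⟨∑ k, vecMulVec (va k) (va k), ∑ k, vecMulVec (vb k) (vb k),
    ⟨p, va, fun k l => ?_, rfl⟩, ⟨p, vb, fun k l => ?_, rfl⟩, ?_, ?_, ?_⟩
  · unfold va; split_ifs <;> simp [hv k l]
  · unfold vb; split_ifs <;> simp [hv k l]
  · refine (sum_vecMulVec_apply_self_eq_zero_iff _ _).2 fun k => ?_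
    unfold va; split_ifs <;> simp [*]
  · refine (sum_vecMulVec_apply_self_eq_zero_iff _ _).2 fun k => ?_
    unfold vb; split_ifs with h
    · rfl
    · exact (mul_eq_zero.1 (hprod k)).resolve_left h
  · rw [← Finset.sum_add_distrib]
    refine Finset.sum_congr rfl fun k _ => ?_
    unfold va vb; split_ifs <;> simp

lemma cpRank_le_cpRank_submatrix_succAbove {n : ℕ} {M : Matrix (Fin (n + 1)) (Fin (n + 1)) ℝ}
    (hM : CompletelyPositive M) {a : Fin (n + 1)} (ha : M a a = 0) :
    cpRank M ≤ cpRank (M.submatrix a.succAbove a.succAbove) := by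
  obtain ⟨w, hw, hM'⟩ := (hM.submatrix a.succAbove).hasCPFactorization_cpRank
  obtain ⟨p, v, hv, rfl⟩ := hM
  have hva : ∀ k, v k a = 0 := (sum_vecMulVec_apply_self_eq_zero_iff v a).1 ha
  let W : Fin (cpRank _) → Fin (n + 1) → ℝ := fun j => Fin.insertNth a 0 (w j)
  have hWa : ∀ j, W j a = 0 := fun j => Fin.insertNth_apply_same _ _ _
  have hW : ∀ j k, W j (a.succAbove k) = w j k :=
    fun j k => Fin.insertNth_apply_succAbove _ _ _ _
  refine cpRank_le_of_hasCPFactorization ⟨W, fun j i => ?_, ?_⟩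
  · rcases a.eq_self_or_eq_succAbove i with rfl | ⟨k, rfl⟩
    · rw [hWa]
    · rw [hW]; exact hw j k
  ext i l
  simp only [sum_vecMulVec_apply]
  rcases a.eq_self_or_eq_succAbove i with rfl | ⟨k, rfl⟩
  · simp [hva, hWa]
  rcases a.eq_self_or_eq_succAbove l with rfl | ⟨l, rfl⟩
  · simp [hva, hWa]
  simpa [hW, sum_vecMulVec_apply] using congrFun₂ hM' k l

lemma cpRank_le_pmax_of_apply_self_eq_zero {n : ℕ} {M : Matrix (Fin (n + 1)) (Fin (n + 1)) ℝ}
    (hM : CompletelyPositive M) {a : Fin (n + 1)} (ha : M a a = 0) : cpRank M ≤ pmax n :=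
  (cpRank_le_cpRank_submatrix_succAbove hM ha).trans (cpRank_le_pmax (hM.submatrix _))

theorem stmt19 {n : ℕ} (M : Matrix (Fin n) (Fin n) ℝ) (hM : CompletelyPositive M)
    (hzero : ∃ i j, M i j = 0) :
    cpRank M ≤ 2 * pmax (n - 1) := by
  obtain ⟨i, j, hij⟩ := hzero
  obtain _ | m := n
  · exact i.elim0
  obtain ⟨A, B, hA, hB, hAi, hBj, rfl⟩ := hM.exists_add_of_apply_eq_zero hij
  calc cpRank (A + B) ≤ cpRank A + cpRank B := cpRank_add_le hA hB
    _ ≤ pmax m + pmax m :=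
      add_le_add (cpRank_le_pmax_of_apply_self_eq_zero hA hAi)
        (cpRank_le_pmax_of_apply_self_eq_zero hB hBj)
    _ = 2 * pmax (m + 1 - 1) := by simp [two_mul]
end
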